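/- The set G = {1 + 2^{-√ℓ} : ℓ ∈ ℕ, ℓ ≥ 1} ⊆ [1,2] has upper Minkowski dimension 0 and Assouad dimension 1. -/

import Mathlib

/-- Minimal number of closed intervals of length `δ` needed to cover `E`. -/
noncomputable def covN (E : Set ℝ) (δ : ℝ) : ℕ :=
  sInf {n : ℕ | ∃ c : Fin n → ℝ, E ⊆ ⋃ i, Set.Icc (c i) (c i + δ)}

/-- Upper Minkowski dimension. -/
noncomputable def dimM (E : Set ℝ) : ℝ :=
  sInf {a : ℝ | 0 < a ∧ ∃ C : ℝ, 0 < C ∧ ∀ δ : ℝ, 0 < δ → δ < 1 →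
    (covN E δ : ℝ) ≤ C * δ ^ (-a)}

/-- Assouad dimension. -/
noncomputable def dimA (E : Set ℝ) : ℝ :=
  sInf {a : ℝ | 0 < a ∧ ∃ C : ℝ, 0 < C ∧ ∀ x y δ : ℝ, 0 < δ → δ < y - x →
    (covN (E ∩ Set.Icc x y) δ : ℝ) ≤ C * ((y - x) / δ) ^ a}

/-- The set `{1 + 2^{-√ℓ} : ℓ ∈ ℕ, ℓ ≥ 1}`. -/
noncomputable def Gset : Set ℝ := {x | ∃ ℓ : ℕ, 1 ≤ ℓ ∧ x = 1 + 2 ^ (-Real.sqrt ℓ)}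

/-!
Points `1 + 2^{-√ℓ}` with `ℓ ≥ (log₂ δ⁻¹)²` all lie in `[1, 1 + δ]`, so `G` is covered by about
`(log₂ δ⁻¹)²` intervals of length `δ`, which is `O(δ^{-a})` for every `a > 0`.
On the other hand the `m + 1` points with `m² ≤ ℓ ≤ m² + m` lie in an interval of length
`2^{-m-1}`, and since `√(ℓ+1) - √ℓ ≥ 1/(2(m+1))` consecutive ones are `≳ 2^{-m}/m` apart.
At scale `δ ≈ 2^{-m}/m` this interval thus needs `m + 1 ≈ |I|/δ` intervals, which rules out
every Assouad exponent below `1`.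
-/

open Real Set Filter

lemma covN_le_of_subset_iUnion {E : Set ℝ} {δ : ℝ} {n : ℕ} (c : Fin n → ℝ)
    (h : E ⊆ ⋃ i, Icc (c i) (c i + δ)) : covN E δ ≤ n :=
  Nat.sInf_le ⟨c, h⟩

lemma covN_le_card {E : Set ℝ} {δ : ℝ} (s : Finset ℝ) (h : E ⊆ ⋃ c ∈ s, Icc c (c + δ)) :
    covN E δ ≤ s.card := by
  refine covN_le_of_subset_iUnion (fun i => (s.equivFin.symm i : ℝ)) fun z hz => ?_
  obtain ⟨c, hc, hzc⟩ := mem_iUnion₂.1 (h hz)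
  exact mem_iUnion.2 ⟨s.equivFin ⟨c, hc⟩, by simpa using hzc⟩

lemma Icc_subset_iUnion_Icc {x y δ : ℝ} (hδ : 0 < δ) :
    Icc x y ⊆ ⋃ i : Fin (⌊(y - x) / δ⌋₊ + 1), Icc (x + i * δ) (x + i * δ + δ) := by
  rintro z ⟨hxz, hzy⟩
  set k := ⌊(z - x) / δ⌋₊
  have hk : k ≤ ⌊(y - x) / δ⌋₊ := Nat.floor_le_floor (by gcongr)
  have hk_le : k * δ ≤ z - x :=
    (le_div_iff₀ hδ).1 (Nat.floor_le (div_nonneg (sub_nonneg.2 hxz) hδ.le))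
  have hk_lt : z - x < (k + 1) * δ := (div_lt_iff₀ hδ).1 (Nat.lt_floor_add_one _)
  exact mem_iUnion.2 ⟨⟨k, Nat.lt_succ_of_le hk⟩, by constructor <;> simp only <;> linarith⟩

lemma covN_le_floor_add_one {E : Set ℝ} {x y δ : ℝ} (hδ : 0 < δ) (hE : E ⊆ Icc x y) :
    covN E δ ≤ ⌊(y - x) / δ⌋₊ + 1 :=
  covN_le_of_subset_iUnion _ (hE.trans (Icc_subset_iUnion_Icc hδ))

-- `E ⊆ Icc x y` matters: a set with no finite cover has the junk value `covN E δ = sInf ∅ = 0`.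
lemma card_le_covN {E : Set ℝ} {x y δ : ℝ} (hδ : 0 < δ) (hE : E ⊆ Icc x y) {n : ℕ}
    (p : Fin n → ℝ) (hpE : ∀ i, p i ∈ E) (hsep : Pairwise fun i j => δ < |p i - p j|) :
    n ≤ covN E δ := by
  obtain ⟨c, hc⟩ : covN E δ ∈ {k | ∃ c : Fin k → ℝ, E ⊆ ⋃ i, Icc (c i) (c i + δ)} :=
    Nat.sInf_mem ⟨_, _, hE.trans (Icc_subset_iUnion_Icc hδ)⟩
  choose f hf using fun i => mem_iUnion.1 (hc (hpE i))
  have hf_inj : Function.Injective f := by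
    intro i j hij
    by_contra hne
    have hi := hf i
    have hj := hf j
    rw [hij] at hi
    exact (hsep hne).not_ge (abs_sub_le_iff.2 ⟨by linarith [hi.2, hj.1], by linarith [hi.1, hj.2]⟩)
  simpa using Fintype.card_le_of_injective f hf_inj

def IsMinkowskiExponent (E : Set ℝ) (a : ℝ) : Prop :=
  0 < a ∧ ∃ C : ℝ, 0 < C ∧ ∀ δ : ℝ, 0 < δ → δ < 1 → (covN E δ : ℝ) ≤ C * δ ^ (-a)

def IsAssouadExponent (E : Set ℝ) (a : ℝ) : Prop :=
  0 < a ∧ ∃ C : ℝ, 0 < C ∧ ∀ x y δ : ℝ, 0 < δ → δ < y - x →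
    (covN (E ∩ Icc x y) δ : ℝ) ≤ C * ((y - x) / δ) ^ a

lemma dimM_eq_sInf (E : Set ℝ) : dimM E = sInf {a | IsMinkowskiExponent E a} := rfl

lemma dimA_eq_sInf (E : Set ℝ) : dimA E = sInf {a | IsAssouadExponent E a} := rfl

lemma dimM_eq_zero {E : Set ℝ} (h : ∀ a : ℝ, 0 < a → IsMinkowskiExponent E a) : dimM E = 0 := by
  rw [dimM_eq_sInf, show {a | IsMinkowskiExponent E a} = Ioi 0 from
    Set.ext fun a => ⟨And.left, h a⟩, csInf_Ioi]

lemma isAssouadExponent_one (E : Set ℝ) : IsAssouadExponent E 1 := by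
  refine ⟨one_pos, 2, two_pos, fun x y δ hδ hδxy => ?_⟩
  have hr : 1 ≤ (y - x) / δ := (one_le_div hδ).2 hδxy.le
  calc (covN (E ∩ Icc x y) δ : ℝ) ≤ ⌊(y - x) / δ⌋₊ + 1 := by
        exact_mod_cast covN_le_floor_add_one hδ inter_subset_right
    _ ≤ 2 * ((y - x) / δ) ^ (1 : ℝ) := by
        rw [rpow_one]; linarith [Nat.floor_le (zero_le_one.trans hr)]

lemma dimA_le_one (E : Set ℝ) : dimA E ≤ 1 :=
  (dimA_eq_sInf E).trans_le (csInf_le ⟨0, fun _ ha => ha.1.le⟩ (isAssouadExponent_one E))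

lemma one_le_dimA {E : Set ℝ} {K : ℝ} (hK : 0 < K)
    (h : ∀ᶠ n : ℕ in atTop, ∃ x y δ : ℝ, 0 < δ ∧ δ < y - x ∧ (y - x) / δ ≤ K * n ∧
      n ≤ covN (E ∩ Icc x y) δ) :
    1 ≤ dimA E := by
  rw [dimA_eq_sInf]
  refine le_csInf ⟨1, isAssouadExponent_one E⟩ fun a ⟨ha, C, hC, hcov⟩ => ?_
  by_contra! ha1
  have hlim : Tendsto (fun n : ℕ => (n : ℝ) ^ (1 - a)) atTop atTop :=
    (tendsto_rpow_atTop (by linarith)).comp tendsto_natCast_atTop_atTop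
  obtain ⟨n, ⟨x, y, δ, hδ, hδxy, hratio, hn⟩, hbig, hpos⟩ :=
    (h.and ((hlim.eventually_gt_atTop (C * K ^ a)).and (eventually_gt_atTop 0))).exists
  have hn0 : (0 : ℝ) < n := by exact_mod_cast hpos
  have hupper : (n : ℝ) ≤ C * K ^ a * n ^ a := calc
    (n : ℝ) ≤ covN (E ∩ Icc x y) δ := by exact_mod_cast hn
    _ ≤ C * ((y - x) / δ) ^ a := hcov x y δ hδ hδxy
    _ ≤ C * (K * n) ^ a := by gcongr; exact div_nonneg (by linarith) hδ.le
    _ = C * K ^ a * n ^ a := by rw [mul_rpow hK.le hn0.le]; ring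
  have hsplit : (n : ℝ) ^ (1 - a) * n ^ a = n := by rw [← rpow_add hn0]; simp
  linarith [mul_lt_mul_of_pos_right hbig (rpow_pos_of_pos hn0 a)]

lemma sq_log_le_rpow {x a : ℝ} (hx : 1 ≤ x) (ha : 0 < a) : log x ^ 2 ≤ (2 / a) ^ 2 * x ^ a := by
  calc log x ^ 2 ≤ (x ^ (a / 2) / (a / 2)) ^ 2 :=
        pow_le_pow_left₀ (log_nonneg hx) (log_le_rpow_div (by linarith) (half_pos ha)) 2
    _ = (2 / a) ^ 2 * x ^ (a / 2 * (2 : ℕ)) := by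
        rw [rpow_mul_natCast (by linarith)]; field_simp
    _ = (2 / a) ^ 2 * x ^ a := by norm_num

lemma mul_sub_mul_log_le_rpow_neg_sub {b u v : ℝ} (hb : 0 < b) :
    b ^ (-v) * ((v - u) * log b) ≤ b ^ (-u) - b ^ (-v) := by
  have hsplit : b ^ (-u) = b ^ (-v) * b ^ (v - u) := by rw [← rpow_add hb]; ring_nf
  have hexp : (v - u) * log b + 1 ≤ b ^ (v - u) := by
    rw [rpow_def_of_pos hb, mul_comm]; exact add_one_le_exp _
  rw [hsplit]
  nlinarith [rpow_pos_of_pos hb (-v)]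

lemma inv_two_mul_sqrt_le_sqrt_add_one_sub {x : ℝ} (hx : 0 ≤ x) :
    (2 * √(x + 1))⁻¹ ≤ √(x + 1) - √x := by
  have hs : √(x + 1) ^ 2 = x + 1 := sq_sqrt (by linarith)
  have ht : √x ^ 2 = x := sq_sqrt hx
  have hst : √x ≤ √(x + 1) := sqrt_le_sqrt (by linarith)
  have hs0 : 0 < √(x + 1) := sqrt_pos.2 (by linarith)
  rw [inv_le_iff_one_le_mul₀' (by positivity)]
  nlinarith [sqrt_nonneg x]

lemma two_rpow_neg_le_two_rpow_neg {s t : ℝ} (h : s ≤ t) : (2 : ℝ) ^ (-t) ≤ 2 ^ (-s) :=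
  rpow_le_rpow_of_exponent_le one_le_two (neg_le_neg h)

lemma Gset_subset_Icc : Gset ⊆ Icc 1 2 := by
  rintro _ ⟨ℓ, -, rfl⟩
  have hle : (2 : ℝ) ^ (-√(ℓ : ℝ)) ≤ 1 := by
    simpa using two_rpow_neg_le_two_rpow_neg (sqrt_nonneg (ℓ : ℝ))
  constructor <;> linarith [rpow_pos_of_pos two_pos (-√(ℓ : ℝ))]

lemma covN_Gset_le {δ : ℝ} (hδ : 0 < δ) : (covN Gset δ : ℝ) ≤ logb 2 δ⁻¹ ^ 2 + 2 := by
  classical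
  set M := ⌈logb 2 δ⁻¹ ^ 2⌉₊
  have hcov : covN Gset δ ≤ M + 1 := by
    refine (covN_le_card
      (insert (1 : ℝ) ((Finset.Icc 1 M).image fun ℓ : ℕ => 1 + 2 ^ (-√(ℓ : ℝ)))) ?_).trans ?_
    · rintro _ ⟨ℓ, hℓ, rfl⟩
      by_cases hℓM : ℓ ≤ M
      · exact mem_iUnion₂.2 ⟨_, Finset.mem_insert_of_mem
          (Finset.mem_image_of_mem _ (Finset.mem_Icc.2 ⟨hℓ, hℓM⟩)), le_rfl, by linarith⟩
      · have hsqrt : logb 2 δ⁻¹ ≤ √(ℓ : ℝ) := (le_abs_self _).trans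
          (abs_le_sqrt ((Nat.le_ceil _).trans (by exact_mod_cast (not_le.1 hℓM).le)))
        have htail : (2 : ℝ) ^ (-√(ℓ : ℝ)) ≤ δ := calc
          _ ≤ 2 ^ (-logb 2 δ⁻¹) := two_rpow_neg_le_two_rpow_neg hsqrt
          _ = δ := by rw [rpow_neg zero_le_two, rpow_logb two_pos (by norm_num) (by positivity),
              inv_inv]
        exact mem_iUnion₂.2 ⟨1, Finset.mem_insert_self _ _,
          by linarith [rpow_pos_of_pos two_pos (-√(ℓ : ℝ))], by linarith⟩
    · exact (Finset.card_insert_le _ _).trans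
        (Nat.add_le_add_right (Finset.card_image_le.trans (by simp)) 1)
  calc (covN Gset δ : ℝ) ≤ M + 1 := by exact_mod_cast hcov
    _ ≤ logb 2 δ⁻¹ ^ 2 + 2 := by linarith [Nat.ceil_lt_add_one (sq_nonneg (logb 2 δ⁻¹))]

lemma isMinkowskiExponent_Gset {a : ℝ} (ha : 0 < a) : IsMinkowskiExponent Gset a := by
  refine ⟨ha, (2 / a) ^ 2 / log 2 ^ 2 + 2, by positivity, fun δ hδ hδ1 => ?_⟩
  have hone : 1 ≤ δ ^ (-a) := one_le_rpow_of_pos_of_le_one_of_nonpos hδ hδ1.le (by linarith)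
  have hlogb : logb 2 δ⁻¹ ^ 2 ≤ (2 / a) ^ 2 / log 2 ^ 2 * δ ^ (-a) := by
    have hlog := sq_log_le_rpow (one_le_inv₀ hδ |>.2 hδ1.le) ha
    rw [inv_rpow hδ.le, ← rpow_neg hδ.le] at hlog
    rw [logb, div_pow, div_mul_eq_mul_div]
    gcongr
  calc (covN Gset δ : ℝ) ≤ logb 2 δ⁻¹ ^ 2 + 2 := covN_Gset_le hδ
    _ ≤ ((2 / a) ^ 2 / log 2 ^ 2 + 2) * δ ^ (-a) := by rw [add_mul]; linarith

lemma le_two_rpow_neg_sqrt_sub_succ {m ℓ : ℕ} (hℓ : ℓ + 1 ≤ (m + 1) ^ 2) :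
    (2 : ℝ) ^ (-(m + 1 : ℝ)) / (4 * (m + 1 : ℝ)) ≤ 2 ^ (-√(ℓ : ℝ)) - 2 ^ (-√((ℓ : ℝ) + 1)) := by
  set v := √((ℓ : ℝ) + 1)
  have hv : v ≤ m + 1 := (sqrt_le_left (by positivity)).2 (by exact_mod_cast hℓ)
  have hv0 : 0 < v := sqrt_pos.2 (by positivity)
  have hlog2 : (1 / 2 : ℝ) ≤ log 2 := by linarith [log_two_gt_d9]
  calc (2 : ℝ) ^ (-(m + 1 : ℝ)) / (4 * (m + 1 : ℝ))
        = 2 ^ (-(m + 1 : ℝ)) * ((2 * (m + 1 : ℝ))⁻¹ * (1 / 2)) := by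
        field_simp; ring
    _ ≤ 2 ^ (-v) * ((2 * v)⁻¹ * (1 / 2)) :=
        mul_le_mul (two_rpow_neg_le_two_rpow_neg hv) (by gcongr) (by positivity) (by positivity)
    _ ≤ 2 ^ (-v) * ((v - √(ℓ : ℝ)) * log 2) := by
        refine mul_le_mul_of_nonneg_left ?_ (by positivity)
        exact mul_le_mul (inv_two_mul_sqrt_le_sqrt_add_one_sub (Nat.cast_nonneg ℓ)) hlog2
          (by norm_num) (sub_nonneg.2 (sqrt_le_sqrt (by linarith)))
    _ ≤ 2 ^ (-√(ℓ : ℝ)) - 2 ^ (-v) := mul_sub_mul_log_le_rpow_neg_sub two_pos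

lemma exists_separated_cluster_Gset {m : ℕ} (hm : 1 ≤ m) :
    ∃ x y δ : ℝ, 0 < δ ∧ δ < y - x ∧ (y - x) / δ ≤ 8 * (m + 1) ∧
      m + 1 ≤ covN (Gset ∩ Icc x y) δ := by
  set X : ℝ := 2 ^ (-(m + 1 : ℝ))
  have hX : 0 < X := rpow_pos_of_pos two_pos _
  have hδ : 0 < X / (8 * (m + 1)) := by positivity
  have h2X : (2 : ℝ) ^ (-(m : ℝ)) = 2 * X := by
    rw [show -(m : ℝ) = 1 + -(m + 1 : ℝ) by ring, rpow_add two_pos, rpow_one]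
  refine ⟨1 + X, 1 + 2 * X, X / (8 * (m + 1)), hδ, ?_, ?_, ?_⟩
  · rw [div_lt_iff₀ (by positivity)]; nlinarith
  · exact le_of_eq (by field_simp; ring)
  set p : Fin (m + 1) → ℝ := fun i => 1 + 2 ^ (-√((m ^ 2 + i : ℕ) : ℝ))
  have hp_mem : ∀ i, p i ∈ Gset ∩ Icc (1 + X) (1 + 2 * X) := by
    intro i
    have hi : (i : ℝ) ≤ m := by exact_mod_cast Nat.lt_succ_iff.1 i.isLt
    have hlow : (m : ℝ) ≤ √((m ^ 2 + i : ℕ) : ℝ) :=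
      (le_sqrt (by positivity) (by positivity)).2 (by push_cast; linarith [i.val.cast_nonneg (α := ℝ)])
    have hup : √((m ^ 2 + i : ℕ) : ℝ) ≤ m + 1 :=
      (sqrt_le_left (by positivity)).2 (by push_cast; nlinarith)
    refine ⟨⟨m ^ 2 + i, by nlinarith, rfl⟩, ?_, ?_⟩
    · linarith [two_rpow_neg_le_two_rpow_neg hup]
    · linarith [two_rpow_neg_le_two_rpow_neg hlow]
  have hgap : ∀ i j : Fin (m + 1), i < j → X / (8 * (m + 1)) < p i - p j := by
    intro i j hij
    have hij' : (i : ℝ) + 1 ≤ j := by exact_mod_cast hij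
    have hfar : (2 : ℝ) ^ (-√((m ^ 2 + j : ℕ) : ℝ)) ≤ 2 ^ (-√(((m ^ 2 + i : ℕ) : ℝ) + 1)) :=
      two_rpow_neg_le_two_rpow_neg (sqrt_le_sqrt (by push_cast; linarith))
    have hstep := le_two_rpow_neg_sqrt_sub_succ (m := m) (ℓ := m ^ 2 + i)
      (by have := j.isLt; have : (i : ℕ) < j := hij; nlinarith)
    have hδ_lt : X / (8 * (m + 1)) < X / (4 * (m + 1)) := by gcongr; norm_num
    simp only [p]
    linarith
  refine card_le_covN hδ inter_subset_right p hp_mem fun i j hij => ?_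
  rcases hij.lt_or_gt with h | h
  · exact (hgap i j h).trans_le (le_abs_self _)
  · exact (hgap j i h).trans_le (abs_sub_comm (p i) (p j) ▸ le_abs_self _)

/-- The set `G = {1 + 2^{-√ℓ} : ℓ ≥ 1}` is contained in `[1,2]`, has upper Minkowski
dimension `0` and Assouad dimension `1`. -/
theorem stmt8 : Gset ⊆ Set.Icc 1 2 ∧ dimM Gset = 0 ∧ dimA Gset = 1 := by
  refine ⟨Gset_subset_Icc, dimM_eq_zero fun _ => isMinkowskiExponent_Gset, ?_⟩
  refine (dimA_le_one Gset).antisymm (one_le_dimA (K := 8) (by norm_num) ?_)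
  filter_upwards [eventually_ge_atTop 2] with n hn
  obtain ⟨m, rfl⟩ : ∃ m, n = m + 1 := ⟨n - 1, by omega⟩
  obtain ⟨x, y, δ, hδ, hδxy, hratio, hcov⟩ := exists_separated_cluster_Gset (m := m) (by omega)
  exact ⟨x, y, δ, hδ, hδxy, by push_cast; exact hratio, by exact_mod_cast hcov⟩
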